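/- arXiv:math/0312417 — 3 statements merged into one kernel-verified Lean document; each statement's English description precedes it below -/
import Mathlib

section
/- If f is quasi-homogeneous with weights q_1, ..., q_n ∈ (0, 1/2] (i.e. f(λ^{q_1}z_1, ..., λ^{q_n}z_n) = λ f(z)) and has an isolated singularity at 0, then the dimension of its Milnor ring equals μ = ∏_{i=1}^n (1/q_i − 1). Verify this for f(x,y) = x^p + y^q: the Milnor ring k[x,y]/(x^{p-1}, y^{q-1}) has dimension (p−1)(q−1). -/
/-!
The ideal `(x₁^{n₁}, …, xₘ^{nₘ})` is a monomial ideal: as a `k`-subspace it is spanned by the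
monomials `x^m` with `nᵢ ≤ mᵢ` for some `i`. The monomials with `mᵢ < nᵢ` for all `i` span a
complement, so they form a basis of the quotient, and there are `∏ nᵢ` of them.
-/

open MvPolynomial

namespace MvPolynomial

variable {σ R : Type*}

theorem isCompl_restrictSupport_compl [CommSemiring R] (s : Set (σ →₀ ℕ)) :
    IsCompl (restrictSupport R s) (restrictSupport R sᶜ) := by
  have h : IsCompl (Finsupp.supported R R s) (Finsupp.supported R R sᶜ) :=
    ⟨Finsupp.disjoint_supported_supported disjoint_compl_right, codisjoint_iff.2 (by
      rw [← Finsupp.supported_union, Set.union_compl_self, Finsupp.supported_univ])⟩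
  have := h.map (Submodule.orderIsoMapComap (AddMonoidAlgebra.coeffLinearEquiv R).symm)
  simp only [Submodule.orderIsoMapComap_apply, Submodule.map_equiv_eq_comap_symm,
    LinearEquiv.symm_symm] at this
  exact this

theorem finrank_quotient_restrictSupport [CommRing R] [Nontrivial R] (s : Set (σ →₀ ℕ)) :
    Module.finrank R (MvPolynomial σ R ⧸ restrictSupport R s) = Nat.card ↥sᶜ := by
  rw [((restrictSupport R s).quotientEquivOfIsCompl _
    (isCompl_restrictSupport_compl s)).finrank_eq,
    Module.finrank_eq_nat_card_basis (basisRestrictSupport R sᶜ)]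

theorem restrictScalars_span_range_X_pow [CommSemiring R] (n : σ → ℕ) :
    (Ideal.span (Set.range fun i => (X i : MvPolynomial σ R) ^ n i)).restrictScalars R =
      restrictSupport R {m | ∃ i, n i ≤ m i} := by
  have hrange : (Set.range fun i => (X i : MvPolynomial σ R) ^ n i) =
      (monomial · 1) '' Set.range fun i => Finsupp.single i (n i) := by
    rw [← Set.range_comp]
    simp only [Function.comp_def, X_pow_eq_monomial]
  ext x
  rw [Submodule.restrictScalars_mem, hrange, mem_ideal_span_monomial_image,
    mem_restrictSupport_iff]
  simp [Set.subset_def, Finsupp.single_le_iff]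

theorem card_compl_setOf_exists_le_apply [Fintype σ] (n : σ → ℕ) :
    Nat.card ↥({m : σ →₀ ℕ | ∃ i, n i ≤ m i}ᶜ) = ∏ i, n i := by
  have e : ↥({m : σ →₀ ℕ | ∃ i, n i ≤ m i}ᶜ) ≃ ∀ i, Fin (n i) :=
    (Finsupp.equivFunOnFinite.subtypeEquiv fun m => by simp).trans
      (Equiv.subtypePiEquivPi.trans (Equiv.piCongrRight fun i => Fin.equivSubtype.symm))
  rw [Nat.card_congr e, Nat.card_pi]
  simp

theorem finrank_quotient_span_range_X_pow [CommRing R] [Nontrivial R] [Fintype σ]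
    (n : σ → ℕ) :
    Module.finrank R
        (MvPolynomial σ R ⧸ Ideal.span (Set.range fun i => (X i : MvPolynomial σ R) ^ n i)) =
      ∏ i, n i := by
  rw [← (Submodule.Quotient.restrictScalarsEquiv R _).finrank_eq,
    restrictScalars_span_range_X_pow, finrank_quotient_restrictSupport,
    card_compl_setOf_exists_le_apply]

end MvPolynomial

theorem stmt_2_general (k : Type*) [Field k] (p q : ℕ)
    (I : Ideal (MvPolynomial (Fin 2) k))
    (hI : I = Ideal.span {X 0 ^ (p - 1), X 1 ^ (q - 1)}) :
    Module.finrank k (MvPolynomial (Fin 2) k ⧸ I) = (p - 1) * (q - 1) ∧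
    (1 / ((1 : ℚ) / p) - 1) * (1 / ((1 : ℚ) / q) - 1) = ((p : ℚ) - 1) * ((q : ℚ) - 1) := by
  refine ⟨?_, by simp only [one_div_one_div]⟩
  have hgens : ({X 0 ^ (p - 1), X 1 ^ (q - 1)} : Set (MvPolynomial (Fin 2) k)) =
      Set.range fun i => X i ^ ![p - 1, q - 1] i := by
    ext
    simp [Fin.exists_fin_two, eq_comm]
  rw [hI, hgens, finrank_quotient_span_range_X_pow, Fin.prod_univ_two]
  rfl

/-- For the quasi-homogeneous singularity `f(x,y) = x^p + y^q` with weights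
`q_x = 1/p`, `q_y = 1/q`, the Milnor ring `k[x,y]/(x^(p-1), y^(q-1))` has dimension
`(p-1)(q-1)`, which agrees with the formula `μ = ∏ (1/q_i − 1)`. -/
theorem stmt_2 (k : Type*) [Field k] [CharZero k] (p q : ℕ) (hp : 2 ≤ p) (hq : 2 ≤ q)
    (I : Ideal (MvPolynomial (Fin 2) k))
    (hI : I = Ideal.span {X 0 ^ (p - 1), X 1 ^ (q - 1)}) :
    Module.finrank k (MvPolynomial (Fin 2) k ⧸ I) = (p - 1) * (q - 1) ∧
    (1 / ((1 : ℚ) / p) - 1) * (1 / ((1 : ℚ) / q) - 1) = ((p : ℚ) - 1) * ((q : ℚ) - 1) :=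
  stmt_2_general k p q I hI
end

section
/- Let G be a finite group, k a field, and α ∈ Z^2(G, k^*) a group 2-cocycle with values in k^*. Then ε(g,h) := α(g,h)/α(ghg^{-1}, g), defined for commuting pairs g,h, satisfies ε(g,g) = 1 and ε(g,h) = ε(h^{-1}, g) for all commuting g, h. -/
/-- For a normalized 2-cocycle `α ∈ Z^2(G, k^*)`, the map
`ε(g,h) := α(g,h)/α(ghg⁻¹, g)` on commuting pairs satisfies `ε(g,g) = 1` and
`ε(g,h) = ε(h⁻¹, g)`. -/
theorem stmt_4 (G : Type*) [Group G] [Finite G] (k : Type*) [Field k]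
    (α : G → G → kˣ)
    (hcoc : ∀ g h l : G, α g h * α (g * h) l = α g (h * l) * α h l)
    (hnorm : ∀ g : G, α 1 g = 1 ∧ α g 1 = 1) :
    (∀ g : G, α g g / α (g * g * g⁻¹) g = 1) ∧
    (∀ g h : G, g * h = h * g →
      α g h / α (g * h * g⁻¹) g = α h⁻¹ g / α (h⁻¹ * g * (h⁻¹)⁻¹) h⁻¹) := by
  constructor
  · intro g
    rw [mul_inv_cancel_right]; exact div_self' (α g g)
  · intro g h hc
    have h1 : g * h * g⁻¹ = h := by rw [hc, mul_inv_cancel_right]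
    have h2 : h⁻¹ * g * (h⁻¹)⁻¹ = g := by
      rw [inv_inv]
      calc h⁻¹ * g * h = h⁻¹ * (g * h) := by group
        _ = h⁻¹ * (h * g) := by rw [hc]
        _ = g := by group
    rw [h1, h2]
    have e1 := hcoc g h h⁻¹
    have e2 := hcoc h g h⁻¹
    have e3 := hcoc h h⁻¹ g
    rw [mul_inv_cancel, (hnorm g).2, one_mul] at e1
    rw [hc] at e1
    rw [mul_inv_cancel, (hnorm g).1, mul_one] at e3
    have hgh : h⁻¹ * g = g * h⁻¹ := by
      calc h⁻¹ * g = h⁻¹ * g * h * h⁻¹ := by group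
        _ = h⁻¹ * (g * h) * h⁻¹ := by group
        _ = h⁻¹ * (h * g) * h⁻¹ := by rw [hc]
        _ = g * h⁻¹ := by group
    rw [hgh] at e3
    -- e1 : α g h * α (h * g) h⁻¹ = α h h⁻¹
    -- e2 : α h g * α (h * g) h⁻¹ = α h (g * h⁻¹) * α g h⁻¹
    -- e3 : α h h⁻¹ = α h (g * h⁻¹) * α h⁻¹ g
    rw [div_eq_div_iff_mul_eq_mul]
    -- α g h * α g h⁻¹ = α h⁻¹ g * α h g
    apply mul_left_cancel (a := α (h * g) h⁻¹)
    calc α (h * g) h⁻¹ * (α g h * α g h⁻¹)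
          = (α g h * α (h * g) h⁻¹) * α g h⁻¹ := by ac_rfl
        _ = α h h⁻¹ * α g h⁻¹ := by rw [e1]
        _ = α h (g * h⁻¹) * α h⁻¹ g * α g h⁻¹ := by rw [e3]
        _ = (α h (g * h⁻¹) * α g h⁻¹) * α h⁻¹ g := by ac_rfl
        _ = (α h g * α (h * g) h⁻¹) * α h⁻¹ g := by rw [e2]
        _ = α (h * g) h⁻¹ * (α h⁻¹ g * α h g) := by ac_rfl
end

section
/- Let Z/2 act on the Milnor ring of D_{n+1}, M = k[x,y]/(x^{n-1}+y^2, xy), by (x,y) ↦ (x,−y). The invariant subring is spanned by {1, x, x^2, ..., x^{n-1}} and is isomorphic as a k-algebra to k[x]/(x^n). -/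
/-! In `M = k[x,y]/(x^(n-1) + y^2, xy)` one has `x^n = x (x^(n-1) + y^2) - y (xy) = 0`, and the
multiplication table of `1, x, …, x^(n-1), y` closes up, so these span `M`, i.e. `M = k y + k[x]`.
The involution fixes `k[x]` and negates `y`; as `2 ≠ 0`, the invariants are exactly `k[x]`.
For the isomorphism `k[t]/(t^n) ≅ k[x]` it remains to see that `p(x) = 0` forces `t^n ∣ p`:
restrict a relation `p(X) = f (X^(n-1) + Y^2) + g XY` to the two branches `Y = 0` and `X = 0`
of `XY = 0`; the first gives `p = f(t,0) t^(n-1)`, the second `p(0) = f(0,t) t^2`, whence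
`f(0,0) = 0` and `t ∣ f(t,0)`. -/

open MvPolynomial

section Nilpotent

variable {k A : Type*} [CommSemiring k] [Semiring A] [Algebra k A]

theorem pow_mem_span_range_pow {x : A} {n : ℕ} (hx : x ^ n = 0) (i : ℕ) :
    x ^ i ∈ Submodule.span k (Set.range fun j : Fin n => x ^ (j : ℕ)) := by
  rcases lt_or_ge i n with hi | hi
  · exact Submodule.subset_span ⟨⟨i, hi⟩, rfl⟩
  · rw [pow_eq_zero_of_le hi hx]
    exact Submodule.zero_mem _

theorem toSubmodule_adjoin_singleton_of_pow_eq_zero {x : A} {n : ℕ} (hx : x ^ n = 0) :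
    Subalgebra.toSubmodule (Algebra.adjoin k {x}) =
      Submodule.span k (Set.range fun j : Fin n => x ^ (j : ℕ)) := by
  apply le_antisymm
  · rw [Algebra.adjoin_eq_span, Submodule.span_le]
    intro a ha
    obtain ⟨i, rfl⟩ := Submonoid.mem_closure_singleton.1 ha
    exact pow_mem_span_range_pow hx i
  · rw [Submodule.span_le]
    rintro _ ⟨i, rfl⟩
    exact pow_mem (Algebra.self_mem_adjoin_singleton k x) _

end Nilpotent

section MilnorRelations

open scoped Pointwise

variable {k A : Type*} [CommRing k] [CommRing A] [Algebra k A] {n : ℕ} {x y : A}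

theorem pow_eq_zero_of_pow_pred_add_sq_eq_zero (hn : n ≠ 0) (hrel : x ^ (n - 1) + y ^ 2 = 0)
    (hxy : x * y = 0) : x ^ n = 0 := by
  obtain ⟨m, rfl⟩ : ∃ m, n = m + 1 := ⟨n - 1, by omega⟩
  rw [Nat.add_sub_cancel] at hrel
  linear_combination x * hrel - y * hxy

theorem span_singleton_sup_adjoin_singleton_eq_top (hn : n ≠ 0)
    (hrel : x ^ (n - 1) + y ^ 2 = 0) (hxy : x * y = 0) (hgen : Algebra.adjoin k {x, y} = ⊤) :
    Submodule.span k {y} ⊔ Subalgebra.toSubmodule (Algebra.adjoin k {x}) = ⊤ := by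
  have hxn := pow_eq_zero_of_pow_pred_add_sq_eq_zero hn hrel hxy
  rw [toSubmodule_adjoin_singleton_of_pow_eq_zero hxn, ← Submodule.span_insert]
  set G := insert y (Set.range fun j : Fin n => x ^ (j : ℕ))
  set W := Submodule.span k G
  have hxW (i : ℕ) : x ^ i ∈ W :=
    Submodule.span_mono (Set.subset_insert _ _) (pow_mem_span_range_pow hxn i)
  have hyW : y ∈ W := Submodule.subset_span (Set.mem_insert _ _)
  have hyxW (i : ℕ) : y * x ^ i ∈ W := by
    rcases i with _ | i
    · simpa using hyW
    · rw [pow_succ', ← mul_assoc, mul_comm y, hxy, zero_mul]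
      exact W.zero_mem
  have hGG : G * G ⊆ W := by
    rw [Set.mul_subset_iff]
    rintro _ (rfl | ⟨i, rfl⟩) _ (rfl | ⟨j, rfl⟩)
    · rw [← sq, eq_neg_of_add_eq_zero_right hrel]
      exact W.neg_mem (hxW _)
    · exact hyxW j
    · rw [mul_comm]
      exact hyxW i
    · rw [← pow_add]
      exact hxW _
  have hmul (a b : A) (ha : a ∈ W) (hb : b ∈ W) : a * b ∈ W := by
    have hWW : W * W ≤ W := by rw [Submodule.span_mul_span, Submodule.span_le]; exact hGG
    exact hWW (Submodule.mul_mem_mul ha hb)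
  have hgenW : Algebra.adjoin k {x, y} ≤ W.toSubalgebra (by simpa using hxW 0) hmul :=
    Algebra.adjoin_le (Set.insert_subset_iff.2 ⟨by simpa using hxW 1, by simpa using hyW⟩)
  rw [hgen] at hgenW
  exact eq_top_iff.2 fun a _ => hgenW Algebra.mem_top

end MilnorRelations

theorem equalizer_eq_adjoin_singleton {k A : Type*} [Field k] [CommRing A] [Algebra k A]
    {x y : A} (h2 : (2 : k) ≠ 0) (σ : A →ₐ[k] A) (hσx : σ x = x) (hσy : σ y = -y)
    (hA : Submodule.span k {y} ⊔ Subalgebra.toSubmodule (Algebra.adjoin k {x}) = ⊤) :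
    AlgHom.equalizer σ (AlgHom.id k A) = Algebra.adjoin k {x} := by
  have hle : Algebra.adjoin k {x} ≤ AlgHom.equalizer σ (AlgHom.id k A) :=
    Algebra.adjoin_le (Set.singleton_subset_iff.2 hσx)
  refine le_antisymm (fun q hq => ?_) hle
  obtain ⟨_, hay, z, hz, rfl⟩ := Submodule.mem_sup.1 (hA ▸ Submodule.mem_top : q ∈ _)
  obtain ⟨a, rfl⟩ := Submodule.mem_span_singleton.1 hay
  have hσz : σ z = z := hle hz
  have hfix : σ (a • y + z) = a • y + z := hq
  rw [map_add, map_smul, hσy, hσz, smul_neg] at hfix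
  have hay0 : (2 : k) • a • y = 0 := by rw [two_smul]; linear_combination -hfix
  rw [smul_eq_zero_iff_right h2] at hay0
  rw [hay0, zero_add]
  exact hz

theorem AdjoinRoot.liftAlgHom_ofId_injective {k A : Type*} [CommRing k] [CommRing A]
    [Algebra k A]    {f : Polynomial k} {x : A} (h : Polynomial.aeval x f = 0)
    (hker : ∀ p : Polynomial k, Polynomial.aeval x p = 0 → f ∣ p) :
    Function.Injective (liftAlgHom f (Algebra.ofId k A) x h) := by
  rw [injective_iff_map_eq_zero]
  intro z hz
  obtain ⟨p, rfl⟩ := mk_surjective z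
  exact mk_eq_zero.2 (hker p hz)

theorem AdjoinRoot.range_liftAlgHom_ofId {k A : Type*} [CommRing k] [CommRing A]
    [Algebra k A]    {f : Polynomial k} {x : A} (h : Polynomial.aeval x f = 0) :
    (liftAlgHom f (Algebra.ofId k A) x h).range = Algebra.adjoin k {x} := by
  rw [Algebra.adjoin_singleton_eq_range_aeval]
  ext a
  constructor
  · rintro ⟨z, rfl⟩
    obtain ⟨p, rfl⟩ := mk_surjective z
    exact ⟨p, rfl⟩
  · rintro ⟨p, rfl⟩
    exact ⟨mk f p, rfl⟩

theorem Ideal.Quotient.adjoin_range_mk_X_eq_top {k σ : Type*} [CommRing k]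
    (I : Ideal (MvPolynomial σ k)) :
    Algebra.adjoin k (Set.range fun i => Ideal.Quotient.mk I (X i)) = ⊤ := by
  have : (Set.range fun i => Ideal.Quotient.mk I (X i)) = mkₐ k I '' Set.range X := by
    rw [← Set.range_comp]; rfl
  rw [this, Algebra.adjoin_image, adjoin_range_X, Algebra.map_top, AlgHom.range_eq_top]
  exact mkₐ_surjective k I

theorem MvPolynomial.coeff_zero_aeval {k σ : Type*} [CommRing k] {v : σ → Polynomial k}
    (hv : ∀ i, (v i).coeff 0 = 0) (f : MvPolynomial σ k) :
    (aeval v f).coeff 0 = constantCoeff f := by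
  have hv₀ : (fun i => Polynomial.aeval (0 : k) (v i)) = 0 := by
    funext i
    simpa [Polynomial.coeff_zero_eq_eval_zero] using hv i
  rw [Polynomial.coeff_zero_eq_eval_zero, ← Polynomial.coe_aeval_eq_eval, ← AlgHom.comp_apply,
    MvPolynomial.comp_aeval, hv₀, MvPolynomial.aeval_zero, Algebra.algebraMap_self_apply]

theorem X_pow_succ_dvd_of_aeval_X_zero_mem {k : Type*} [CommRing k] [IsDomain k] {m : ℕ}
    (hm : m ≠ 0) {p : Polynomial k}
    (hp : Polynomial.aeval (X 0 : MvPolynomial (Fin 2) k) p ∈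
      Ideal.span {X 0 ^ m + X 1 ^ 2, X 0 * X 1}) :
    Polynomial.X ^ (m + 1) ∣ p := by
  obtain ⟨f, g, hfg⟩ := Ideal.mem_span_pair.1 hp
  let e₁ : MvPolynomial (Fin 2) k →ₐ[k] Polynomial k := aeval ![Polynomial.X, 0]
  let e₀ : MvPolynomial (Fin 2) k →ₐ[k] Polynomial k := aeval ![0, Polynomial.X]
  have h₁ : e₁ f * Polynomial.X ^ m = p := by
    simpa [e₁, ← Polynomial.aeval_algHom_apply] using congrArg e₁ hfg
  have h₀ : e₀ f * Polynomial.X ^ 2 = Polynomial.C (p.coeff 0) := by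
    simpa [e₀, ← Polynomial.aeval_algHom_apply, hm, ← Polynomial.coeff_zero_eq_aeval_zero']
      using congrArg e₀ hfg
  have hp₀ : p.coeff 0 = 0 := by
    simpa using (congrArg (Polynomial.coeff · 0) h₀).symm
  have he₀ : e₀ f = 0 := by
    rw [hp₀, map_zero] at h₀
    exact (mul_eq_zero.1 h₀).resolve_right (pow_ne_zero _ Polynomial.X_ne_zero)
  -- `e₀ f` and `e₁ f` both have the constant term of `f`: the two branches meet at the origin
  have hf : constantCoeff f = 0 := by
    rw [← coeff_zero_aeval (v := ![0, Polynomial.X]) (by simp [Fin.forall_fin_two]) f]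
    exact congrArg (Polynomial.coeff · 0) he₀
  have he₁ : Polynomial.X ∣ e₁ f := by
    rw [Polynomial.X_dvd_iff, coeff_zero_aeval (by simp [Fin.forall_fin_two]), hf]
  rw [← h₁, pow_succ']
  exact mul_dvd_mul_right he₁ _

/-- Let `Z/2` act on the Milnor ring `M = k[x,y]/(x^(n-1)+y^2, xy)` of `D_{n+1}` by
`(x,y) ↦ (x,−y)`.  The invariant subring is spanned by `{1, x, ..., x^(n-1)}` and is
isomorphic as a `k`-algebra to `k[x]/(x^n)` (folding of `D_{n+1}` to `B_n`). -/
theorem stmt_14 (k : Type*) [Field k] [CharZero k] (n : ℕ) (hn : 3 ≤ n)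
    (I : Ideal (MvPolynomial (Fin 2) k))
    (hI : I = Ideal.span {X 0 ^ (n - 1) + X 1 ^ 2, X 0 * X 1})
    (σ : (MvPolynomial (Fin 2) k ⧸ I) →ₐ[k] (MvPolynomial (Fin 2) k ⧸ I))
    (hσx : σ (Ideal.Quotient.mk I (X 0)) = Ideal.Quotient.mk I (X 0))
    (hσy : σ (Ideal.Quotient.mk I (X 1)) = - Ideal.Quotient.mk I (X 1)) :
    Subalgebra.toSubmodule (AlgHom.equalizer σ (AlgHom.id k _)) =
      Submodule.span k (Set.range fun i : Fin n =>
        Ideal.Quotient.mk I (X 0) ^ (i : ℕ)) ∧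
    ∃ e : AdjoinRoot ((Polynomial.X : Polynomial k) ^ n) ≃ₐ[k]
        AlgHom.equalizer σ (AlgHom.id k _),
      ((e (AdjoinRoot.root ((Polynomial.X : Polynomial k) ^ n)) :
          AlgHom.equalizer σ (AlgHom.id k _)) : MvPolynomial (Fin 2) k ⧸ I)
        = Ideal.Quotient.mk I (X 0) := by
  set x := Ideal.Quotient.mk I (X 0) with hx
  set y := Ideal.Quotient.mk I (X 1) with hy
  have hrel : x ^ (n - 1) + y ^ 2 = 0 := by
    rw [← map_pow, ← map_pow, ← map_add, Ideal.Quotient.eq_zero_iff_mem, hI]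
    exact Ideal.subset_span (by simp)
  have hxy : x * y = 0 := by
    rw [← map_mul, Ideal.Quotient.eq_zero_iff_mem, hI]
    exact Ideal.subset_span (by simp)
  have hxn : x ^ n = 0 := pow_eq_zero_of_pow_pred_add_sq_eq_zero (by omega) hrel hxy
  have hgen : Algebra.adjoin k {x, y} = ⊤ := by
    rw [← Ideal.Quotient.adjoin_range_mk_X_eq_top I]
    congr 1
    ext
    simp [hx, hy, Fin.exists_fin_two, eq_comm]
  have hinv : AlgHom.equalizer σ (AlgHom.id k _) = Algebra.adjoin k {x} :=
    equalizer_eq_adjoin_singleton two_ne_zero σ hσx hσy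
      (span_singleton_sup_adjoin_singleton_eq_top (by omega) hrel hxy hgen)
  refine ⟨by rw [hinv, toSubmodule_adjoin_singleton_of_pow_eq_zero hxn], ?_⟩
  have hroot : Polynomial.aeval x (Polynomial.X ^ n : Polynomial k) = 0 := by simp [hxn]
  have hker (p : Polynomial k) (hp : Polynomial.aeval x p = 0) : Polynomial.X ^ n ∣ p := by
    rw [hx, ← Ideal.Quotient.mkₐ_eq_mk k, Polynomial.aeval_algHom_apply,
      Ideal.Quotient.mkₐ_eq_mk, Ideal.Quotient.eq_zero_iff_mem, hI] at hp
    simpa [Nat.sub_add_cancel (by omega : 1 ≤ n)] using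
      X_pow_succ_dvd_of_aeval_X_zero_mem (by omega) hp
  let ψ := AdjoinRoot.liftAlgHom _ (Algebra.ofId k _) x hroot
  refine ⟨(AlgEquiv.ofInjective ψ (AdjoinRoot.liftAlgHom_ofId_injective hroot hker)).trans
    (Subalgebra.equivOfEq _ _ ((AdjoinRoot.range_liftAlgHom_ofId hroot).trans hinv.symm)), ?_⟩
  exact AdjoinRoot.liftAlgHom_root _ _ _ hroot
end
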